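/- arXiv:2604.23487 — 3 statements merged into one kernel-verified Lean document; each statement's English description precedes it below -/
import Mathlib

section
/- For every x ∈ 𝒳, the penalized value function converges pointwise to the constrained value function: lim_{ρ→∞} F_ρ(x) = Φ(x). -/
/-!
Feasible points carry no penalty, so `F_ρ(x) ≥ Φ(x)` for every `ρ`. Conversely, if `b > Φ(x)`,
the penalty `h_g` is positive, hence bounded below by some `m > 0`, on the compact set of points
of `𝒴 × Λ` where `f(x, ·) ≥ b`; once `ρ m` exceeds the range of `f(x, ·)`, every penalized value
is below `b`. The penalty is continuous because the lower-level value `min_𝒴 g(·, λ)` of a jointly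
continuous `g` over compact `𝒴` is continuous in `λ`.
-/

open Set Filter Topology

section Penalty

variable {X : Type*} [TopologicalSpace X] {K : Set X} {φ h : X → ℝ}

theorem sSup_image_le_sSup_image_sub_mul (hK : IsCompact K) (hφ : Continuous φ)
    (hh : Continuous h) (hfeas : ∃ p ∈ K, h p = 0) (ρ : ℝ) :
    sSup (φ '' {p ∈ K | h p = 0}) ≤ sSup ((fun p => φ p - ρ * h p) '' K) := by
  obtain ⟨p₀, hp₀K, hp₀⟩ := hfeas
  refine csSup_le ⟨φ p₀, p₀, ⟨hp₀K, hp₀⟩, rfl⟩ ?_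
  rintro _ ⟨p, ⟨hpK, hp⟩, rfl⟩
  have hbdd := (hK.image (by fun_prop : Continuous fun p => φ p - ρ * h p)).bddAbove
  simpa [hp] using le_csSup hbdd (mem_image_of_mem _ hpK)

theorem eventually_sSup_image_sub_mul_lt (hK : IsCompact K) (hφ : Continuous φ)
    (hh : Continuous h) (hh₀ : ∀ p ∈ K, 0 ≤ h p) (hfeas : ∃ p ∈ K, h p = 0) {b : ℝ}
    (hb : sSup (φ '' {p ∈ K | h p = 0}) < b) :
    ∀ᶠ ρ in atTop, sSup ((fun p => φ p - ρ * h p) '' K) < b := by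
  obtain ⟨M, hM⟩ := (hK.image hφ).bddAbove
  have hKne : K.Nonempty := hfeas.imp fun _ hp => hp.1
  have hC : IsCompact (K ∩ {p | b ≤ φ p}) := hK.inter_right (isClosed_le continuous_const hφ)
  have hhC : ∀ p ∈ K ∩ {p | b ≤ φ p}, 0 < h p := by
    rintro p ⟨hpK, hbp⟩
    refine (hh₀ p hpK).lt_of_ne fun hp => ?_
    have hpZ : p ∈ {p ∈ K | h p = 0} := ⟨hpK, hp.symm⟩
    have hφp := le_csSup ((hK.image hφ).bddAbove.mono (image_mono (sep_subset _ _)))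
      (mem_image_of_mem φ hpZ)
    exact (hb.trans_le hbp).not_ge hφp
  obtain ⟨m, hm, hmC⟩ := hC.exists_forall_le' hh.continuousOn hhC
  filter_upwards [eventually_gt_atTop (max 0 ((M - b) / m))] with ρ hρ
  have hρ₀ : 0 < ρ := (le_max_left _ _).trans_lt hρ
  have hρm : M - b < ρ * m := (div_lt_iff₀ hm).1 ((le_max_right _ _).trans_lt hρ)
  obtain ⟨p, hpK, hp⟩ := (hK.image (by fun_prop : Continuous fun p => φ p - ρ * h p)).sSup_mem
    (hKne.image _)
  rw [← hp]
  by_cases hbp : b ≤ φ p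
  · nlinarith [hmC p ⟨hpK, hbp⟩, hM (mem_image_of_mem φ hpK)]
  · nlinarith [hh₀ p hpK]

theorem tendsto_sSup_image_sub_mul_atTop (hK : IsCompact K) (hφ : Continuous φ)
    (hh : Continuous h) (hh₀ : ∀ p ∈ K, 0 ≤ h p) (hfeas : ∃ p ∈ K, h p = 0) :
    Tendsto (fun ρ => sSup ((fun p => φ p - ρ * h p) '' K)) atTop
      (𝓝 (sSup (φ '' {p ∈ K | h p = 0}))) :=
  tendsto_order.2 ⟨fun _ ha => .of_forall fun ρ =>
      ha.trans_le (sSup_image_le_sSup_image_sub_mul hK hφ hh hfeas ρ),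
    fun _ hb => eventually_sSup_image_sub_mul_lt hK hφ hh hh₀ hfeas hb⟩

end Penalty

theorem penalized_value_function_tendsto_general
    {dx dy dl : ℕ}
    (Xset : Set (EuclideanSpace ℝ (Fin dx)))
    (Yset : Set (EuclideanSpace ℝ (Fin dy)))
    (Lam : Set (EuclideanSpace ℝ (Fin dl)))
    (hYne : Yset.Nonempty) (hYcp : IsCompact Yset)
    (hLne : Lam.Nonempty) (hLcp : IsCompact Lam)
    (fbar : EuclideanSpace ℝ (Fin dx) → EuclideanSpace ℝ (Fin dy) → ℝ)
    (hfbarC1 : ContDiff ℝ 1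
      (fun p : EuclideanSpace ℝ (Fin dx) × EuclideanSpace ℝ (Fin dy) => fbar p.1 p.2))
    (A : Matrix (Fin dl) (Fin dx) ℝ) (B : Matrix (Fin dl) (Fin dy) ℝ)
    (cvec : EuclideanSpace ℝ (Fin dl))
    (f : EuclideanSpace ℝ (Fin dx) → EuclideanSpace ℝ (Fin dy) →
      EuclideanSpace ℝ (Fin dl) → ℝ)
    (hfdef : ∀ x y l, f x y l =
      fbar x y + ∑ i, l i * (A.mulVec (fun j => x j) i + B.mulVec (fun j => y j) i - cvec i))
    (g : EuclideanSpace ℝ (Fin dy) → EuclideanSpace ℝ (Fin dl) → ℝ)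
    (hgC1 : ContDiff ℝ 1
      (fun p : EuclideanSpace ℝ (Fin dy) × EuclideanSpace ℝ (Fin dl) => g p.1 p.2))
    -- the value function of the lower level, the penalized value function `F_ρ`,
    -- and the constrained value function `Φ`
    (vg : EuclideanSpace ℝ (Fin dl) → ℝ)
    (hvg : ∀ l, vg l = sInf ((fun z => g z l) '' Yset))
    (hg : EuclideanSpace ℝ (Fin dy) → EuclideanSpace ℝ (Fin dl) → ℝ)
    (hhg : ∀ y l, hg y l = g y l - vg l)
    (F : ℝ → EuclideanSpace ℝ (Fin dx) → ℝ)
    (hF : ∀ ρ x, F ρ x = sSup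
      ((fun p : EuclideanSpace ℝ (Fin dy) × EuclideanSpace ℝ (Fin dl) =>
        f x p.1 p.2 - ρ * hg p.1 p.2) '' (Yset ×ˢ Lam)))
    (Φ : EuclideanSpace ℝ (Fin dx) → ℝ)
    (hΦ : ∀ x, Φ x = sSup
      ((fun p : EuclideanSpace ℝ (Fin dy) × EuclideanSpace ℝ (Fin dl) =>
        f x p.1 p.2) '' {p ∈ Yset ×ˢ Lam | hg p.1 p.2 = 0})) :
    ∀ x ∈ Xset, Tendsto (fun ρ : ℝ => F ρ x) atTop (𝓝 (Φ x)) := by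
  intro x _
  have hgc : Continuous fun p : EuclideanSpace ℝ (Fin dy) × EuclideanSpace ℝ (Fin dl) =>
      g p.1 p.2 := hgC1.continuous
  have hvgc : Continuous vg := by
    simpa only [← hvg] using hYcp.continuous_sInf (f := fun l z => g z l) (by fun_prop)
  have hfxc : Continuous fun p : EuclideanSpace ℝ (Fin dy) × EuclideanSpace ℝ (Fin dl) =>
      f x p.1 p.2 := by
    simp only [hfdef]
    have := hfbarC1.continuous
    fun_prop
  have hhgc : Continuous fun p : EuclideanSpace ℝ (Fin dy) × EuclideanSpace ℝ (Fin dl) =>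
      hg p.1 p.2 := by
    simp only [hhg]
    fun_prop
  have hvg_le : ∀ l, ∀ z ∈ Yset, vg l ≤ g z l := fun l z hz => by
    rw [hvg]
    exact csInf_le (hYcp.image (by fun_prop)).bddBelow (mem_image_of_mem _ hz)
  have hvg_mem : ∀ l, ∃ z ∈ Yset, g z l = vg l := fun l => by
    rw [hvg]
    exact (hYcp.image (by fun_prop)).sInf_mem (hYne.image _)
  have hhg₀ : ∀ p ∈ Yset ×ˢ Lam, 0 ≤ hg p.1 p.2 := fun p hp => by
    rw [hhg, sub_nonneg]
    exact hvg_le p.2 p.1 hp.1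
  have hfeas : ∃ p ∈ Yset ×ˢ Lam, hg p.1 p.2 = 0 := by
    obtain ⟨l, hl⟩ := hLne
    obtain ⟨z, hz, hzl⟩ := hvg_mem l
    exact ⟨(z, l), ⟨hz, hl⟩, by rw [hhg, hzl, sub_self]⟩
  simp only [hF, hΦ]
  exact tendsto_sSup_image_sub_mul_atTop (hYcp.prod hLcp) hfxc hhgc hhg₀ hfeas

/-- Lemma 3.2 (consistency of the penalty): for every `x ∈ 𝒳`,
`F_ρ(x) → Φ(x)` as `ρ → ∞`. -/
theorem penalized_value_function_tendsto
    {dx dy dl : ℕ}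
    (Xset : Set (EuclideanSpace ℝ (Fin dx)))
    (Yset : Set (EuclideanSpace ℝ (Fin dy)))
    (Lam : Set (EuclideanSpace ℝ (Fin dl)))
    (hXne : Xset.Nonempty) (hXcv : Convex ℝ Xset) (hXcp : IsCompact Xset)
    (hYne : Yset.Nonempty) (hYcv : Convex ℝ Yset) (hYcp : IsCompact Yset)
    (hLne : Lam.Nonempty) (hLcv : Convex ℝ Lam) (hLcp : IsCompact Lam)
    (fbar : EuclideanSpace ℝ (Fin dx) → EuclideanSpace ℝ (Fin dy) → ℝ)
    (Lfbar : ℝ)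
    (hfbarC1 : ContDiff ℝ 1
      (fun p : EuclideanSpace ℝ (Fin dx) × EuclideanSpace ℝ (Fin dy) => fbar p.1 p.2))
    (hfbarLip : ∀ x x' y y',
      ‖gradient (fun x0 => fbar x0 y) x - gradient (fun x0 => fbar x0 y') x'‖ ^ 2 +
        ‖gradient (fun y0 => fbar x y0) y - gradient (fun y0 => fbar x' y0) y'‖ ^ 2 ≤
        Lfbar ^ 2 * (‖x - x'‖ ^ 2 + ‖y - y'‖ ^ 2))
    (A : Matrix (Fin dl) (Fin dx) ℝ) (B : Matrix (Fin dl) (Fin dy) ℝ)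
    (cvec : EuclideanSpace ℝ (Fin dl))
    (f : EuclideanSpace ℝ (Fin dx) → EuclideanSpace ℝ (Fin dy) →
      EuclideanSpace ℝ (Fin dl) → ℝ)
    (hfdef : ∀ x y l, f x y l =
      fbar x y + ∑ i, l i * (A.mulVec (fun j => x j) i + B.mulVec (fun j => y j) i - cvec i))
    (g : EuclideanSpace ℝ (Fin dy) → EuclideanSpace ℝ (Fin dl) → ℝ)
    (Lg : ℝ)
    (hgC1 : ContDiff ℝ 1
      (fun p : EuclideanSpace ℝ (Fin dy) × EuclideanSpace ℝ (Fin dl) => g p.1 p.2))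
    (hgLip : ∀ y y' l l',
      ‖gradient (fun y0 => g y0 l) y - gradient (fun y0 => g y0 l') y'‖ ^ 2 +
        ‖gradient (fun l0 => g y l0) l - gradient (fun l0 => g y' l0) l'‖ ^ 2 ≤
        Lg ^ 2 * (‖y - y'‖ ^ 2 + ‖l - l'‖ ^ 2))
    (hgconv : ∀ l ∈ Lam, ConvexOn ℝ univ (fun y => g y l))
    -- the value function of the lower level, the penalized value function `F_ρ`,
    -- and the constrained value function `Φ`
    (vg : EuclideanSpace ℝ (Fin dl) → ℝ)
    (hvg : ∀ l, vg l = sInf ((fun z => g z l) '' Yset))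
    (hg : EuclideanSpace ℝ (Fin dy) → EuclideanSpace ℝ (Fin dl) → ℝ)
    (hhg : ∀ y l, hg y l = g y l - vg l)
    (F : ℝ → EuclideanSpace ℝ (Fin dx) → ℝ)
    (hF : ∀ ρ x, F ρ x = sSup
      ((fun p : EuclideanSpace ℝ (Fin dy) × EuclideanSpace ℝ (Fin dl) =>
        f x p.1 p.2 - ρ * hg p.1 p.2) '' (Yset ×ˢ Lam)))
    (Φ : EuclideanSpace ℝ (Fin dx) → ℝ)
    (hΦ : ∀ x, Φ x = sSup
      ((fun p : EuclideanSpace ℝ (Fin dy) × EuclideanSpace ℝ (Fin dl) =>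
        f x p.1 p.2) '' {p ∈ Yset ×ˢ Lam | hg p.1 p.2 = 0})) :
    ∀ x ∈ Xset, Tendsto (fun ρ : ℝ => F ρ x) atTop (𝓝 (Φ x)) :=
  penalized_value_function_tendsto_general Xset Yset Lam hYne hYcp hLne hLcp fbar hfbarC1 A B cvec f
    hfdef g hgC1 vg hvg hg hhg F hF Φ hΦ
end

section
/- Let ρ > 0, ε > 0, and let (x_ε,y_ε,λ_ε,z_ε) ∈ 𝒳×𝒴×Λ×𝒴 be an ε-optimal solution of the penalized min–max–min problem with parameter ρ. Then Φ(x_ε) ≤ Φ_ρ* + 2ε + δ_ρ(x_ε) and f(x_ε,y_ε,λ_ε) ≥ Φ* − 2ε − δ_ρ(x_ε). -/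
open Set Filter Topology

/-! Minimizing `P_ρ` over `z` gives `Ψ_ρ = f - ρ h_g`, since `g(·, λ)` attains its minimum on the
compact `𝒴`; so the max–min value in the second optimality condition is `F_ρ(x_ε)`. The first
bound chains `Φ ≤ F_ρ + δ_ρ` with the second and third conditions. For the second, the first
condition says `P_ρ - Ψ_ρ ≤ ε` at `(x_ε, y_ε, λ_ε)`, so `f ≥ P_ρ + ρ h_g - ε ≥ P_ρ - ε ≥ F_ρ - 2ε`
as `h_g ≥ 0`; and `Φ* ≤ Φ(x_ε)` because on the compact `𝒳` the function `Φ` dominates the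
continuous `f(·, z, λ)` at any lower-level feasible `(z, λ)`, hence is bounded below. -/

theorem continuous_lagrangian {dx dy dl : ℕ}
    (fbar : EuclideanSpace ℝ (Fin dx) → EuclideanSpace ℝ (Fin dy) → ℝ)
    (hfbar : Continuous
      (fun p : EuclideanSpace ℝ (Fin dx) × EuclideanSpace ℝ (Fin dy) => fbar p.1 p.2))
    (A : Matrix (Fin dl) (Fin dx) ℝ) (B : Matrix (Fin dl) (Fin dy) ℝ)
    (c : EuclideanSpace ℝ (Fin dl)) :
    Continuous (fun q : EuclideanSpace ℝ (Fin dx) × EuclideanSpace ℝ (Fin dy) ×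
        EuclideanSpace ℝ (Fin dl) =>
      fbar q.1 q.2.1 +
        ∑ i, q.2.2 i * (A.mulVec (fun j => q.1 j) i + B.mulVec (fun j => q.2.1 j) i - c i)) := by
  fun_prop

theorem sInf_image_penalty_eq {Z : Type*} [TopologicalSpace Z] {s : Set Z} {φ : Z → ℝ}
    (hs : IsCompact s) (hne : s.Nonempty) (hφ : ContinuousOn φ s) (a b : ℝ) {ρ : ℝ} (hρ : 0 ≤ ρ) :
    sInf ((fun z => a - ρ * (b - φ z)) '' s) = a - ρ * (b - sInf (φ '' s)) := by
  have hmono : Monotone fun t => a - ρ * (b - t) := fun _ _ h => by dsimp only; gcongr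
  have hleast := hmono.map_isLeast ((hs.image_of_continuousOn hφ).isLeast_sInf (hne.image φ))
  rw [image_image] at hleast
  exact hleast.csInf_eq

theorem bddBelow_image_sSup_image {X Z : Type*} [TopologicalSpace X] [TopologicalSpace Z]
    {f : X → Z → ℝ} {s : Set X} {K S : Set Z} (hs : IsCompact s) (hK : IsCompact K)
    (hSK : S ⊆ K) (hS : S.Nonempty) (hfx : ∀ z, ContinuousOn (f · z) s)
    (hfz : ∀ x, ContinuousOn (f x) K) :
    BddBelow ((fun x => sSup (f x '' S)) '' s) := by
  obtain ⟨z, hz⟩ := hS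
  obtain ⟨m, hm⟩ := hs.bddBelow_image (hfx z)
  refine ⟨m, ?_⟩
  rintro _ ⟨x, hx, rfl⟩
  have hbdd : BddAbove (f x '' S) := (hK.bddAbove_image (hfz x)).mono (image_mono hSK)
  exact (hm ⟨x, hx, rfl⟩).trans (le_csSup hbdd ⟨z, hz, rfl⟩)

theorem eps_optimal_value_bounds_general
    {dx dy dl : ℕ}
    (Xset : Set (EuclideanSpace ℝ (Fin dx)))
    (Yset : Set (EuclideanSpace ℝ (Fin dy)))
    (Lam : Set (EuclideanSpace ℝ (Fin dl)))
    (hXcp : IsCompact Xset)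
    (hYne : Yset.Nonempty) (hYcp : IsCompact Yset)
    (hLcp : IsCompact Lam)
    (fbar : EuclideanSpace ℝ (Fin dx) → EuclideanSpace ℝ (Fin dy) → ℝ)
    (hfbarC1 : ContDiff ℝ 1
      (fun p : EuclideanSpace ℝ (Fin dx) × EuclideanSpace ℝ (Fin dy) => fbar p.1 p.2))
    (A : Matrix (Fin dl) (Fin dx) ℝ) (B : Matrix (Fin dl) (Fin dy) ℝ)
    (cvec : EuclideanSpace ℝ (Fin dl))
    (f : EuclideanSpace ℝ (Fin dx) → EuclideanSpace ℝ (Fin dy) →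
      EuclideanSpace ℝ (Fin dl) → ℝ)
    (hfdef : ∀ x y l, f x y l =
      fbar x y + ∑ i, l i * (A.mulVec (fun j => x j) i + B.mulVec (fun j => y j) i - cvec i))
    (g : EuclideanSpace ℝ (Fin dy) → EuclideanSpace ℝ (Fin dl) → ℝ)
    (hgC1 : ContDiff ℝ 1
      (fun p : EuclideanSpace ℝ (Fin dy) × EuclideanSpace ℝ (Fin dl) => g p.1 p.2))
    (vg : EuclideanSpace ℝ (Fin dl) → ℝ)
    (hvg : ∀ l, vg l = sInf ((fun z => g z l) '' Yset))
    (hg : EuclideanSpace ℝ (Fin dy) → EuclideanSpace ℝ (Fin dl) → ℝ)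
    (hhg : ∀ y l, hg y l = g y l - vg l)
    (P : EuclideanSpace ℝ (Fin dx) → EuclideanSpace ℝ (Fin dy) →
      EuclideanSpace ℝ (Fin dl) → EuclideanSpace ℝ (Fin dy) → ℝ)
    (ρ : ℝ) (hρ : 0 < ρ)
    (hPdef : ∀ x y l z, P x y l z = f x y l - ρ * (g y l - g z l))
    (F : EuclideanSpace ℝ (Fin dx) → ℝ)
    (hF : ∀ x, F x = sSup
      ((fun p : EuclideanSpace ℝ (Fin dy) × EuclideanSpace ℝ (Fin dl) =>
        f x p.1 p.2 - ρ * hg p.1 p.2) '' (Yset ×ˢ Lam)))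
    (Φ : EuclideanSpace ℝ (Fin dx) → ℝ)
    (hΦ : ∀ x, Φ x = sSup
      ((fun p : EuclideanSpace ℝ (Fin dy) × EuclideanSpace ℝ (Fin dl) =>
        f x p.1 p.2) '' {p ∈ Yset ×ˢ Lam | hg p.1 p.2 = 0}))
    (ΦStar : ℝ) (hΦStar : ΦStar = sInf (Φ '' Xset))
    (FStar : ℝ)
    (δ : EuclideanSpace ℝ (Fin dx) → ℝ) (hδ : ∀ x, δ x = |F x - Φ x|)
    (ε : ℝ)
    (xe : EuclideanSpace ℝ (Fin dx)) (ye : EuclideanSpace ℝ (Fin dy))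
    (le : EuclideanSpace ℝ (Fin dl)) (ze : EuclideanSpace ℝ (Fin dy))
    (hxe : xe ∈ Xset) (hye : ye ∈ Yset) (hle : le ∈ Lam)
    (hopt1 : P xe ye le ze - sInf ((fun z => P xe ye le z) '' Yset) ≤ ε)
    (hopt2 : sSup ((fun p : EuclideanSpace ℝ (Fin dy) × EuclideanSpace ℝ (Fin dl) =>
      sInf ((fun z => P xe p.1 p.2 z) '' Yset)) '' (Yset ×ˢ Lam)) - P xe ye le ze ≤ ε)
    (hopt3 : P xe ye le ze - FStar ≤ ε)
    :
    Φ xe ≤ FStar + 2 * ε + δ xe ∧ f xe ye le ≥ ΦStar - 2 * ε - δ xe := by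
  have hfc : Continuous fun q : EuclideanSpace ℝ (Fin dx) × EuclideanSpace ℝ (Fin dy) ×
      EuclideanSpace ℝ (Fin dl) => f q.1 q.2.1 q.2.2 := by
    simpa only [hfdef] using continuous_lagrangian fbar hfbarC1.continuous A B cvec
  have hgc (l : EuclideanSpace ℝ (Fin dl)) : Continuous (g · l) :=
    hgC1.continuous.comp (Continuous.prodMk_left l)
  have hvg_least (l : EuclideanSpace ℝ (Fin dl)) : IsLeast ((g · l) '' Yset) (vg l) :=
    hvg l ▸ (hYcp.image (hgc l)).isLeast_sInf (hYne.image _)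
  have hinner (y l) : sInf ((P xe y l ·) '' Yset) = f xe y l - ρ * hg y l := by
    simp only [hPdef, hhg, hvg]
    exact sInf_image_penalty_eq hYcp hYne (hgc l).continuousOn _ _ hρ.le
  rw [hinner] at hopt1
  rw [image_congr fun p _ => hinner p.1 p.2, ← hF] at hopt2
  have hhg_nonneg : 0 ≤ hg ye le := hhg ye le ▸ sub_nonneg.2 ((hvg_least le).2 ⟨ye, hye, rfl⟩)
  have hΦStar_le : ΦStar ≤ Φ xe := by
    obtain ⟨z0, hz0, hz0min⟩ := (hvg_least le).1
    have hfeas : (z0, le) ∈ {p ∈ Yset ×ˢ Lam | hg p.1 p.2 = 0} :=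
      ⟨⟨hz0, hle⟩, by rw [hhg, ← hz0min, sub_self]⟩
    rw [hΦStar, show Φ = _ from funext hΦ]
    refine csInf_le (bddBelow_image_sSup_image hXcp (hYcp.prod hLcp) (sep_subset _ _)
      ⟨_, hfeas⟩ ?_ ?_) ⟨xe, hxe, rfl⟩
    · exact fun p => (hfc.comp (Continuous.prodMk_left p)).continuousOn
    · exact fun x => (hfc.comp (Continuous.prodMk_right x)).continuousOn
  have hδ_bounds := abs_le.1 (hδ xe).ge
  have hpenalty_nonneg := mul_nonneg hρ.le hhg_nonneg
  constructor <;> linarith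

/-- Lemma 3.3, first part: bounds on `Φ(x_ε)` and `f(x_ε,y_ε,λ_ε)` at an ε-optimal
solution of the penalized min–max–min problem. -/
theorem eps_optimal_value_bounds
    {dx dy dl : ℕ}
    (Xset : Set (EuclideanSpace ℝ (Fin dx)))
    (Yset : Set (EuclideanSpace ℝ (Fin dy)))
    (Lam : Set (EuclideanSpace ℝ (Fin dl)))
    (hXne : Xset.Nonempty) (hXcv : Convex ℝ Xset) (hXcp : IsCompact Xset)
    (hYne : Yset.Nonempty) (hYcv : Convex ℝ Yset) (hYcp : IsCompact Yset)
    (hLne : Lam.Nonempty) (hLcv : Convex ℝ Lam) (hLcp : IsCompact Lam)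
    (fbar : EuclideanSpace ℝ (Fin dx) → EuclideanSpace ℝ (Fin dy) → ℝ)
    (Lfbar : ℝ)
    (hfbarC1 : ContDiff ℝ 1
      (fun p : EuclideanSpace ℝ (Fin dx) × EuclideanSpace ℝ (Fin dy) => fbar p.1 p.2))
    (hfbarLip : ∀ x x' y y',
      ‖gradient (fun x0 => fbar x0 y) x - gradient (fun x0 => fbar x0 y') x'‖ ^ 2 +
        ‖gradient (fun y0 => fbar x y0) y - gradient (fun y0 => fbar x' y0) y'‖ ^ 2 ≤
        Lfbar ^ 2 * (‖x - x'‖ ^ 2 + ‖y - y'‖ ^ 2))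
    (A : Matrix (Fin dl) (Fin dx) ℝ) (B : Matrix (Fin dl) (Fin dy) ℝ)
    (cvec : EuclideanSpace ℝ (Fin dl))
    (f : EuclideanSpace ℝ (Fin dx) → EuclideanSpace ℝ (Fin dy) →
      EuclideanSpace ℝ (Fin dl) → ℝ)
    (hfdef : ∀ x y l, f x y l =
      fbar x y + ∑ i, l i * (A.mulVec (fun j => x j) i + B.mulVec (fun j => y j) i - cvec i))
    (g : EuclideanSpace ℝ (Fin dy) → EuclideanSpace ℝ (Fin dl) → ℝ)
    (Lg : ℝ)
    (hgC1 : ContDiff ℝ 1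
      (fun p : EuclideanSpace ℝ (Fin dy) × EuclideanSpace ℝ (Fin dl) => g p.1 p.2))
    (hgLip : ∀ y y' l l',
      ‖gradient (fun y0 => g y0 l) y - gradient (fun y0 => g y0 l') y'‖ ^ 2 +
        ‖gradient (fun l0 => g y l0) l - gradient (fun l0 => g y' l0) l'‖ ^ 2 ≤
        Lg ^ 2 * (‖y - y'‖ ^ 2 + ‖l - l'‖ ^ 2))
    (hgconv : ∀ l ∈ Lam, ConvexOn ℝ univ (fun y => g y l))
    (vg : EuclideanSpace ℝ (Fin dl) → ℝ)
    (hvg : ∀ l, vg l = sInf ((fun z => g z l) '' Yset))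
    (hg : EuclideanSpace ℝ (Fin dy) → EuclideanSpace ℝ (Fin dl) → ℝ)
    (hhg : ∀ y l, hg y l = g y l - vg l)
    (P : EuclideanSpace ℝ (Fin dx) → EuclideanSpace ℝ (Fin dy) →
      EuclideanSpace ℝ (Fin dl) → EuclideanSpace ℝ (Fin dy) → ℝ)
    (ρ : ℝ) (hρ : 0 < ρ)
    (hPdef : ∀ x y l z, P x y l z = f x y l - ρ * (g y l - g z l))
    (F : EuclideanSpace ℝ (Fin dx) → ℝ)
    (hF : ∀ x, F x = sSup
      ((fun p : EuclideanSpace ℝ (Fin dy) × EuclideanSpace ℝ (Fin dl) =>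
        f x p.1 p.2 - ρ * hg p.1 p.2) '' (Yset ×ˢ Lam)))
    (Φ : EuclideanSpace ℝ (Fin dx) → ℝ)
    (hΦ : ∀ x, Φ x = sSup
      ((fun p : EuclideanSpace ℝ (Fin dy) × EuclideanSpace ℝ (Fin dl) =>
        f x p.1 p.2) '' {p ∈ Yset ×ˢ Lam | hg p.1 p.2 = 0}))
    (ΦStar : ℝ) (hΦStar : ΦStar = sInf (Φ '' Xset))
    (FStar : ℝ) (hFStar : FStar = sInf (F '' Xset))
    (δ : EuclideanSpace ℝ (Fin dx) → ℝ) (hδ : ∀ x, δ x = |F x - Φ x|)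
    (ε : ℝ) (hε : 0 < ε)
    (xe : EuclideanSpace ℝ (Fin dx)) (ye : EuclideanSpace ℝ (Fin dy))
    (le : EuclideanSpace ℝ (Fin dl)) (ze : EuclideanSpace ℝ (Fin dy))
    (hxe : xe ∈ Xset) (hye : ye ∈ Yset) (hle : le ∈ Lam) (hze : ze ∈ Yset)
    (hopt1 : P xe ye le ze - sInf ((fun z => P xe ye le z) '' Yset) ≤ ε)
    (hopt2 : sSup ((fun p : EuclideanSpace ℝ (Fin dy) × EuclideanSpace ℝ (Fin dl) =>
      sInf ((fun z => P xe p.1 p.2 z) '' Yset)) '' (Yset ×ˢ Lam)) - P xe ye le ze ≤ ε)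
    (hopt3 : P xe ye le ze - FStar ≤ ε)
    :
    Φ xe ≤ FStar + 2 * ε + δ xe ∧ f xe ye le ≥ ΦStar - 2 * ε - δ xe :=
  eps_optimal_value_bounds_general Xset Yset Lam hXcp hYne hYcp hLcp fbar hfbarC1 A B cvec f hfdef g
    hgC1 vg hvg hg hhg P ρ hρ hPdef F hF Φ hΦ ΦStar hΦStar FStar δ hδ ε xe ye le ze hxe hye hle
    hopt1 hopt2 hopt3
end

section
/- Let (ρ_k) be a sequence of positive reals with ρ_k → ∞ and (ε_k) a sequence of positive reals with ε_k → 0, and for each k let (x^k,y^k,λ^k,z^k) ∈ 𝒳×𝒴×Λ×𝒴 be an ε_k-optimal solution of the penalized min–max–min problem with parameter ρ_k. Then every accumulation point (x_∞,y_∞,λ_∞) of the sequence {(x^k,y^k,λ^k)} is a global minimax point of the minimax bilevel problem: (y_∞,λ_∞) ∈ F_low, Φ(x_∞) = Φ* = min_{x∈𝒳} Φ(x), and f(x_∞,y_∞,λ_∞) = Φ(x_∞) = max_{(y,λ)∈F_low} f(x_∞,y,λ). -/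
open Set Filter Topology

lemma marginal_inf_continuous {α β : Type*} [MetricSpace α] [MetricSpace β] [ProperSpace β]
    {K : Set α} (hK : IsCompact K) (hKne : K.Nonempty)
    {G : α → β → ℝ} (hG : Continuous fun p : α × β => G p.1 p.2) :
    Continuous fun b => sInf ((fun a => G a b) '' K) := by
  rw [Metric.continuous_iff]
  intro b ε hε
  have hcp : IsCompact (K ×ˢ Metric.closedBall b 1) :=
    hK.prod (isCompact_closedBall b 1)
  have hUC : UniformContinuousOn (fun p : α × β => G p.1 p.2) (K ×ˢ Metric.closedBall b 1) :=
    hcp.uniformContinuousOn_of_continuous hG.continuousOn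
  rw [Metric.uniformContinuousOn_iff] at hUC
  obtain ⟨δ, hδ, hδ'⟩ := hUC (ε/2) (by linarith)
  refine ⟨min δ 1, by positivity, fun b' hb' => ?_⟩
  have hb'1 : b' ∈ Metric.closedBall b 1 := by
    have := lt_of_lt_of_le hb' (min_le_right _ _)
    simp [Metric.mem_closedBall]; linarith [dist_nonneg (x := b') (y := b)]
  have hbb : b ∈ Metric.closedBall b 1 := by simp
  have key : ∀ a ∈ K, |G a b' - G a b| < ε/2 := by
    intro a ha
    have := hδ' (a, b') ⟨ha, hb'1⟩ (a, b) ⟨ha, hbb⟩ (by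
      simp only [Prod.dist_eq, dist_self]
      exact max_lt hδ (lt_of_lt_of_le hb' (min_le_left _ _)))
    simpa [Real.dist_eq] using this
  have hbdd : ∀ c : β, BddBelow ((fun a => G a c) '' K) := by
    intro c
    exact (hK.image_of_continuousOn ((hG.comp (continuous_id.prodMk continuous_const)).continuousOn)).bddBelow
  have hle : ∀ c : β, ∀ a ∈ K, sInf ((fun a => G a c) '' K) ≤ G a c := by
    intro c a ha; exact csInf_le (hbdd c) ⟨a, ha, rfl⟩
  have hattain : ∀ c : β, ∃ a ∈ K, sInf ((fun a => G a c) '' K) = G a c := by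
    intro c
    obtain ⟨a, ha, hmin⟩ := hK.exists_isMinOn hKne
      ((hG.comp (continuous_id.prodMk continuous_const)).continuousOn)
    exact ⟨a, ha, le_antisymm (hle c a ha) (le_csInf (hKne.image _) (by
      rintro _ ⟨a', ha', rfl⟩; exact hmin ha'))⟩
  obtain ⟨a1, ha1, he1⟩ := hattain b'
  obtain ⟨a2, ha2, he2⟩ := hattain b
  rw [Real.dist_eq]
  refine abs_lt.mpr ⟨?_, ?_⟩
  · have h := hle b a1 ha1
    have h1 := (abs_lt.mp (key a1 ha1)).1
    rw [he1]; linarith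
  · have h := hle b' a2 ha2
    have h2 := (abs_lt.mp (key a2 ha2)).2
    rw [he2]; linarith

lemma marginal_sup_continuous {α β : Type*} [MetricSpace α] [MetricSpace β] [ProperSpace β]
    {K : Set α} (hK : IsCompact K) (hKne : K.Nonempty)
    {G : α → β → ℝ} (hG : Continuous fun p : α × β => G p.1 p.2) :
    Continuous fun b => sSup ((fun a => G a b) '' K) := by
  have h := marginal_inf_continuous hK hKne (G := fun a b => -(G a b)) (hG.neg)
  have he : (fun b => sSup ((fun a => G a b) '' K)) =
      fun b => -sInf ((fun a => -(G a b)) '' K) := by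
    funext b
    have : ((fun a => -(G a b)) '' K) = -((fun a => G a b) '' K) := by
      ext t; simp [Set.mem_neg, Set.mem_image]
      constructor
      · rintro ⟨a, ha, rfl⟩; exact ⟨a, ha, by ring⟩
      · rintro ⟨a, ha, h'⟩; exact ⟨a, ha, by linarith⟩
    rw [this, Real.sInf_def, neg_neg, neg_neg]
  rw [he]; exact h.neg

/-- Theorem 3.4: any accumulation point of the iterates of the ideal penalty method
is a global minimax point of the minimax bilevel problem. -/
theorem penalty_method_cluster_point_global_minimax
    {dx dy dl : ℕ}
    (Xset : Set (EuclideanSpace ℝ (Fin dx)))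
    (Yset : Set (EuclideanSpace ℝ (Fin dy)))
    (Lam : Set (EuclideanSpace ℝ (Fin dl)))
    (hXne : Xset.Nonempty) (hXcv : Convex ℝ Xset) (hXcp : IsCompact Xset)
    (hYne : Yset.Nonempty) (hYcv : Convex ℝ Yset) (hYcp : IsCompact Yset)
    (hLne : Lam.Nonempty) (hLcv : Convex ℝ Lam) (hLcp : IsCompact Lam)
    (fbar : EuclideanSpace ℝ (Fin dx) → EuclideanSpace ℝ (Fin dy) → ℝ)
    (Lfbar : ℝ)
    (hfbarC1 : ContDiff ℝ 1
      (fun p : EuclideanSpace ℝ (Fin dx) × EuclideanSpace ℝ (Fin dy) => fbar p.1 p.2))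
    (hfbarLip : ∀ x x' y y',
      ‖gradient (fun x0 => fbar x0 y) x - gradient (fun x0 => fbar x0 y') x'‖ ^ 2 +
        ‖gradient (fun y0 => fbar x y0) y - gradient (fun y0 => fbar x' y0) y'‖ ^ 2 ≤
        Lfbar ^ 2 * (‖x - x'‖ ^ 2 + ‖y - y'‖ ^ 2))
    (A : Matrix (Fin dl) (Fin dx) ℝ) (B : Matrix (Fin dl) (Fin dy) ℝ)
    (cvec : EuclideanSpace ℝ (Fin dl))
    (f : EuclideanSpace ℝ (Fin dx) → EuclideanSpace ℝ (Fin dy) →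
      EuclideanSpace ℝ (Fin dl) → ℝ)
    (hfdef : ∀ x y l, f x y l =
      fbar x y + ∑ i, l i * (A.mulVec (fun j => x j) i + B.mulVec (fun j => y j) i - cvec i))
    (g : EuclideanSpace ℝ (Fin dy) → EuclideanSpace ℝ (Fin dl) → ℝ)
    (Lg : ℝ)
    (hgC1 : ContDiff ℝ 1
      (fun p : EuclideanSpace ℝ (Fin dy) × EuclideanSpace ℝ (Fin dl) => g p.1 p.2))
    (hgLip : ∀ y y' l l',
      ‖gradient (fun y0 => g y0 l) y - gradient (fun y0 => g y0 l') y'‖ ^ 2 +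
        ‖gradient (fun l0 => g y l0) l - gradient (fun l0 => g y' l0) l'‖ ^ 2 ≤
        Lg ^ 2 * (‖y - y'‖ ^ 2 + ‖l - l'‖ ^ 2))
    (hgconv : ∀ l ∈ Lam, ConvexOn ℝ univ (fun y => g y l))
    (vg : EuclideanSpace ℝ (Fin dl) → ℝ)
    (hvg : ∀ l, vg l = sInf ((fun z => g z l) '' Yset))
    (hg : EuclideanSpace ℝ (Fin dy) → EuclideanSpace ℝ (Fin dl) → ℝ)
    (hhg : ∀ y l, hg y l = g y l - vg l)
    (P : ℝ → EuclideanSpace ℝ (Fin dx) → EuclideanSpace ℝ (Fin dy) →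
      EuclideanSpace ℝ (Fin dl) → EuclideanSpace ℝ (Fin dy) → ℝ)
    (hPdef : ∀ ρ x y l z, P ρ x y l z = f x y l - ρ * (g y l - g z l))
    (F : ℝ → EuclideanSpace ℝ (Fin dx) → ℝ)
    (hF : ∀ ρ x, F ρ x = sSup
      ((fun p : EuclideanSpace ℝ (Fin dy) × EuclideanSpace ℝ (Fin dl) =>
        f x p.1 p.2 - ρ * hg p.1 p.2) '' (Yset ×ˢ Lam)))
    (Φ : EuclideanSpace ℝ (Fin dx) → ℝ)
    (hΦ : ∀ x, Φ x = sSup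
      ((fun p : EuclideanSpace ℝ (Fin dy) × EuclideanSpace ℝ (Fin dl) =>
        f x p.1 p.2) '' {p ∈ Yset ×ˢ Lam | hg p.1 p.2 = 0}))
    (ΦStar : ℝ) (hΦStar : ΦStar = sInf (Φ '' Xset))
    -- the sequences of penalty parameters, tolerances and ε_k-optimal solutions
    (ρk εk : ℕ → ℝ)
    (hρkpos : ∀ k, 0 < ρk k) (hρktop : Tendsto ρk atTop atTop)
    (hεkpos : ∀ k, 0 < εk k) (hεk0 : Tendsto εk atTop (𝓝 0))
    (xk : ℕ → EuclideanSpace ℝ (Fin dx)) (yk : ℕ → EuclideanSpace ℝ (Fin dy))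
    (lk : ℕ → EuclideanSpace ℝ (Fin dl)) (zk : ℕ → EuclideanSpace ℝ (Fin dy))
    (hxk : ∀ k, xk k ∈ Xset) (hyk : ∀ k, yk k ∈ Yset)
    (hlk : ∀ k, lk k ∈ Lam) (hzk : ∀ k, zk k ∈ Yset)
    (hopt1 : ∀ k, P (ρk k) (xk k) (yk k) (lk k) (zk k) -
      sInf ((fun z => P (ρk k) (xk k) (yk k) (lk k) z) '' Yset) ≤ εk k)
    (hopt2 : ∀ k, sSup ((fun p : EuclideanSpace ℝ (Fin dy) × EuclideanSpace ℝ (Fin dl) =>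
      sInf ((fun z => P (ρk k) (xk k) p.1 p.2 z) '' Yset)) '' (Yset ×ˢ Lam)) -
      P (ρk k) (xk k) (yk k) (lk k) (zk k) ≤ εk k)
    (hopt3 : ∀ k, P (ρk k) (xk k) (yk k) (lk k) (zk k) - sInf (F (ρk k) '' Xset) ≤ εk k) :
    ∀ (xi : EuclideanSpace ℝ (Fin dx)) (yi : EuclideanSpace ℝ (Fin dy))
      (li : EuclideanSpace ℝ (Fin dl)),
      MapClusterPt (xi, yi, li) atTop (fun k => (xk k, yk k, lk k)) →
      ((yi, li) ∈ Yset ×ˢ Lam ∧ hg yi li = 0) ∧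
        Φ xi = ΦStar ∧ f xi yi li = Φ xi := by
  intro xi yi li hcl
  set K : Set ((EuclideanSpace ℝ (Fin dy)) × (EuclideanSpace ℝ (Fin dl))) := Yset ×ˢ Lam with hKdef
  have hKcp : IsCompact K := hYcp.prod hLcp
  have hKne : K.Nonempty := hYne.prod hLne
  -- continuity of f
  have hfc : Continuous fun q : (EuclideanSpace ℝ (Fin dx)) × (EuclideanSpace ℝ (Fin dy)) × (EuclideanSpace ℝ (Fin dl)) => f q.1 q.2.1 q.2.2 := by
    have h1 : (fun q : (EuclideanSpace ℝ (Fin dx)) × (EuclideanSpace ℝ (Fin dy)) × (EuclideanSpace ℝ (Fin dl)) => f q.1 q.2.1 q.2.2) = fun q =>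
        fbar q.1 q.2.1 + ∑ i, q.2.2 i *
          ((∑ j, A i j * q.1 j) + (∑ j, B i j * q.2.1 j) - cvec i) := by
      funext q; rw [hfdef]; simp [Matrix.mulVec, dotProduct]
    rw [h1]
    have hfbarc : Continuous fun q : (EuclideanSpace ℝ (Fin dx)) × (EuclideanSpace ℝ (Fin dy)) × (EuclideanSpace ℝ (Fin dl)) => fbar q.1 q.2.1 :=
      hfbarC1.continuous.comp (continuous_fst.prodMk (continuous_fst.comp continuous_snd))
    refine hfbarc.add (continuous_finset_sum _ fun i _ => ?_)
    have hcx : Continuous fun q : (EuclideanSpace ℝ (Fin dx)) × (EuclideanSpace ℝ (Fin dy)) × (EuclideanSpace ℝ (Fin dl)) => ∑ j, A i j * q.1 j :=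
      continuous_finset_sum _ fun j _ =>
        continuous_const.mul ((EuclideanSpace.proj j).continuous.comp continuous_fst)
    have hcy : Continuous fun q : (EuclideanSpace ℝ (Fin dx)) × (EuclideanSpace ℝ (Fin dy)) × (EuclideanSpace ℝ (Fin dl)) => ∑ j, B i j * q.2.1 j :=
      continuous_finset_sum _ fun j _ =>
        continuous_const.mul ((EuclideanSpace.proj j).continuous.comp
          (continuous_fst.comp continuous_snd))
    have hcli : Continuous fun q : (EuclideanSpace ℝ (Fin dx)) × (EuclideanSpace ℝ (Fin dy)) × (EuclideanSpace ℝ (Fin dl)) => q.2.2 i :=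
      (EuclideanSpace.proj i).continuous.comp (continuous_snd.comp continuous_snd)
    exact hcli.mul ((hcx.add hcy).sub continuous_const)
  have hgc : Continuous fun p : (EuclideanSpace ℝ (Fin dy)) × (EuclideanSpace ℝ (Fin dl)) => g p.1 p.2 := hgC1.continuous
  -- vg basics
  have hbddg : ∀ l, BddBelow ((fun z => g z l) '' Yset) := fun l =>
    (hYcp.image_of_continuousOn
      ((hgc.comp (continuous_id.prodMk continuous_const)).continuousOn)).bddBelow
  have hvgle : ∀ l, ∀ z ∈ Yset, vg l ≤ g z l := by
    intro l z hz; rw [hvg]; exact csInf_le (hbddg l) ⟨z, hz, rfl⟩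
  have hvgatt : ∀ l, ∃ z ∈ Yset, g z l = vg l := by
    intro l
    obtain ⟨z, hz, hmin⟩ := hYcp.exists_isMinOn hYne
      ((hgc.comp (continuous_id.prodMk continuous_const)).continuousOn)
    refine ⟨z, hz, le_antisymm ?_ (hvgle l z hz)⟩
    rw [hvg]
    exact le_csInf (hYne.image _) (by rintro _ ⟨z', hz', rfl⟩; exact hmin hz')
  have hvgc : Continuous vg := by
    have h := marginal_inf_continuous hYcp hYne (G := fun z l => g z l) hgc
    have : vg = fun l => sInf ((fun z => g z l) '' Yset) := funext hvg
    rw [this]; exact h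
  have hhgc : Continuous fun p : (EuclideanSpace ℝ (Fin dy)) × (EuclideanSpace ℝ (Fin dl)) => hg p.1 p.2 := by
    have : (fun p : (EuclideanSpace ℝ (Fin dy)) × (EuclideanSpace ℝ (Fin dl)) => hg p.1 p.2) = fun p => g p.1 p.2 - vg p.2 := by
      funext p; rw [hhg]
    rw [this]; exact hgc.sub (hvgc.comp continuous_snd)
  have hgnn : ∀ y ∈ Yset, ∀ l, 0 ≤ hg y l := by
    intro y hy l; rw [hhg]; have := hvgle l y hy; linarith
  -- inner minimum formula
  have hinner : ∀ ρ : ℝ, 0 ≤ ρ → ∀ x y l,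
      sInf ((fun z => P ρ x y l z) '' Yset) = f x y l - ρ * hg y l := by
    intro ρ hρ x y l
    refine IsLeast.csInf_eq ⟨?_, ?_⟩
    · obtain ⟨z, hz, hze⟩ := hvgatt l
      exact ⟨z, hz, by show P ρ x y l z = _; rw [hPdef, hze, hhg]⟩
    · rintro w ⟨z, hz, rfl⟩
      show _ ≤ P ρ x y l z
      rw [hPdef, hhg]
      have := mul_le_mul_of_nonneg_left (hvgle l z hz) hρ
      nlinarith
  -- F basics
  have hFbdd : ∀ (ρ : ℝ) (x : (EuclideanSpace ℝ (Fin dx))),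
      BddAbove ((fun p : (EuclideanSpace ℝ (Fin dy)) × (EuclideanSpace ℝ (Fin dl)) => f x p.1 p.2 - ρ * hg p.1 p.2) '' K) := by
    intro ρ x
    refine (hKcp.image_of_continuousOn (Continuous.continuousOn ?_)).bddAbove
    exact ((hfc.comp (continuous_const.prodMk continuous_id)).sub (continuous_const.mul hhgc))
  have hFub : ∀ (ρ : ℝ) (x : (EuclideanSpace ℝ (Fin dx))), ∀ p ∈ K, f x p.1 p.2 - ρ * hg p.1 p.2 ≤ F ρ x := by
    intro ρ x p hp; rw [hF]; exact le_csSup (hFbdd ρ x) ⟨p, hp, rfl⟩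
  have hFatt : ∀ (ρ : ℝ) (x : (EuclideanSpace ℝ (Fin dx))), ∃ p ∈ K, F ρ x = f x p.1 p.2 - ρ * hg p.1 p.2 := by
    intro ρ x
    obtain ⟨p, hp, hmax⟩ := hKcp.exists_isMaxOn hKne (Continuous.continuousOn
      ((hfc.comp (continuous_const.prodMk continuous_id)).sub (continuous_const.mul hhgc)))
    refine ⟨p, hp, le_antisymm ?_ (hFub ρ x p hp)⟩
    rw [hF]
    exact csSup_le (hKne.image _) (by rintro _ ⟨p', hp', rfl⟩; exact hmax hp')
  -- feasible set
  set Flow : Set ((EuclideanSpace ℝ (Fin dy)) × (EuclideanSpace ℝ (Fin dl))) := {p ∈ K | hg p.1 p.2 = 0} with hFlowdef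
  have hFlowsub : Flow ⊆ K := fun p hp => hp.1
  have hFlowclosed : IsClosed Flow := by
    have : Flow = K ∩ (fun p : (EuclideanSpace ℝ (Fin dy)) × (EuclideanSpace ℝ (Fin dl)) => hg p.1 p.2) ⁻¹' {0} := by
      ext p; simp [hFlowdef]
    rw [this]
    exact hKcp.isClosed.inter (isClosed_singleton.preimage hhgc)
  have hFlowcp : IsCompact Flow := hKcp.of_isClosed_subset hFlowclosed hFlowsub
  have hFlowne : Flow.Nonempty := by
    obtain ⟨l0, hl0⟩ := hLne
    obtain ⟨z0, hz0, hz0e⟩ := hvgatt l0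
    exact ⟨(z0, l0), ⟨⟨hz0, hl0⟩, by rw [hhg, hz0e]; ring⟩⟩
  -- Φ basics
  have hΦbdd : ∀ x : (EuclideanSpace ℝ (Fin dx)), BddAbove ((fun p : (EuclideanSpace ℝ (Fin dy)) × (EuclideanSpace ℝ (Fin dl)) => f x p.1 p.2) '' Flow) := by
    intro x
    exact (hFlowcp.image_of_continuousOn
      ((hfc.comp (continuous_const.prodMk continuous_id)).continuousOn)).bddAbove
  have hΦub : ∀ x : (EuclideanSpace ℝ (Fin dx)), ∀ p ∈ Flow, f x p.1 p.2 ≤ Φ x := by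
    intro x p hp; rw [hΦ]; exact le_csSup (hΦbdd x) ⟨p, hp, rfl⟩
  have hΦatt : ∀ x : (EuclideanSpace ℝ (Fin dx)), ∃ p ∈ Flow, Φ x = f x p.1 p.2 := by
    intro x
    obtain ⟨p, hp, hmax⟩ := hFlowcp.exists_isMaxOn hFlowne
      ((hfc.comp (continuous_const.prodMk continuous_id)).continuousOn)
    refine ⟨p, hp, le_antisymm ?_ (hΦub x p hp)⟩
    rw [hΦ]
    exact csSup_le (hFlowne.image _) (by rintro _ ⟨p', hp', rfl⟩; exact hmax hp')
  have hΦc : Continuous Φ := by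
    have h := marginal_sup_continuous hFlowcp hFlowne
      (G := fun (p : (EuclideanSpace ℝ (Fin dy)) × (EuclideanSpace ℝ (Fin dl))) (x : (EuclideanSpace ℝ (Fin dx))) => f x p.1 p.2)
      (hfc.comp (continuous_snd.prodMk continuous_fst))
    have : Φ = fun x => sSup ((fun p : (EuclideanSpace ℝ (Fin dy)) × (EuclideanSpace ℝ (Fin dl)) => f x p.1 p.2) '' Flow) := funext hΦ
    rw [this]; exact h
  have hΦF : ∀ ρ : ℝ, 0 ≤ ρ → ∀ x, Φ x ≤ F ρ x := by
    intro ρ hρ x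
    obtain ⟨p, hp, hpe⟩ := hΦatt x
    have := hFub ρ x p (hFlowsub hp)
    rw [hp.2] at this
    rw [hpe]; linarith
  -- ΦStar basics
  have hΦSle : ∀ x ∈ Xset, ΦStar ≤ Φ x := by
    intro x hx; rw [hΦStar]
    exact csInf_le (hXcp.image_of_continuousOn hΦc.continuousOn).bddBelow ⟨x, hx, rfl⟩
  have hxstar : ∃ x0 ∈ Xset, Φ x0 = ΦStar := by
    obtain ⟨x0, hx0, hmin⟩ := hXcp.exists_isMinOn hXne hΦc.continuousOn
    refine ⟨x0, hx0, le_antisymm ?_ (hΦSle x0 hx0)⟩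
    rw [hΦStar]
    exact le_csInf (hXne.image _) (by rintro _ ⟨x', hx', rfl⟩; exact hmin hx')
  obtain ⟨xs, hxsX, hxse⟩ := hxstar
  -- key penalty limit lemma at a fixed point
  have hkey : ∀ x : (EuclideanSpace ℝ (Fin dx)), ∀ ε : ℝ, 0 < ε → ∃ ρ0 : ℝ, 0 ≤ ρ0 ∧
      ∀ ρ : ℝ, ρ0 ≤ ρ → F ρ x ≤ Φ x + ε := by
    intro x ε hε
    set S : Set ((EuclideanSpace ℝ (Fin dy)) × (EuclideanSpace ℝ (Fin dl))) := K ∩ (fun p : (EuclideanSpace ℝ (Fin dy)) × (EuclideanSpace ℝ (Fin dl)) => f x p.1 p.2) ⁻¹' Ici (Φ x + ε) with hSdef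
    have hScp : IsCompact S := hKcp.inter_right
      (isClosed_Ici.preimage (hfc.comp (continuous_const.prodMk continuous_id)))
    rcases S.eq_empty_or_nonempty with hS | hS
    · refine ⟨0, le_refl 0, fun ρ hρ => ?_⟩
      rw [hF]
      refine csSup_le (hKne.image _) ?_
      rintro _ ⟨p, hp, rfl⟩
      show f x p.1 p.2 - ρ * hg p.1 p.2 ≤ Φ x + ε
      have hnotS : p ∉ S := by rw [hS]; exact notMem_empty p
      have hlt : f x p.1 p.2 < Φ x + ε := by
        by_contra hcon
        exact hnotS ⟨hp, le_of_not_gt hcon⟩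
      have : 0 ≤ ρ * hg p.1 p.2 := mul_nonneg hρ (hgnn p.1 hp.1 p.2)
      linarith
    · obtain ⟨q, hqS, hqmin⟩ := hScp.exists_isMinOn hS
        (hhgc.continuousOn)
      set δ := hg q.1 q.2 with hδdef
      have hδpos : 0 < δ := by
        rcases lt_or_eq_of_le (hgnn q.1 hqS.1.1 q.2) with h | h
        · exact h
        · exfalso
          have hqFlow : q ∈ Flow := ⟨hqS.1, h.symm⟩
          have := hΦub x q hqFlow
          have := hqS.2
          simp only [mem_preimage, mem_Ici] at this
          linarith
      obtain ⟨Mx, hMx⟩ : ∃ Mx, ∀ p ∈ K, f x p.1 p.2 ≤ Mx := by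
        obtain ⟨Mx, hMx⟩ := (hKcp.image_of_continuousOn
          ((hfc.comp (continuous_const.prodMk continuous_id)).continuousOn)).bddAbove
        exact ⟨Mx, fun p hp => hMx ⟨p, hp, rfl⟩⟩
      refine ⟨max 0 ((Mx - Φ x) / δ), le_max_left _ _, fun ρ hρ => ?_⟩
      have hρ0 : 0 ≤ ρ := le_trans (le_max_left _ _) hρ
      rw [hF]
      refine csSup_le (hKne.image _) ?_
      rintro _ ⟨p, hp, rfl⟩
      show f x p.1 p.2 - ρ * hg p.1 p.2 ≤ Φ x + ε
      by_cases hpS : p ∈ S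
      · have h1 : δ ≤ hg p.1 p.2 := hqmin hpS
        have h2 : ρ * δ ≤ ρ * hg p.1 p.2 := mul_le_mul_of_nonneg_left h1 hρ0
        have h3 : (Mx - Φ x) / δ ≤ ρ := le_trans (le_max_right _ _) hρ
        have h4 : Mx - Φ x ≤ ρ * δ := by
          rw [div_le_iff₀ hδpos] at h3; linarith
        have h5 := hMx p hp
        linarith
      · have hlt : f x p.1 p.2 < Φ x + ε := by
          by_contra hcon
          exact hpS ⟨hp, le_of_not_gt hcon⟩
        have : 0 ≤ ρ * hg p.1 p.2 := mul_nonneg hρ0 (hgnn p.1 hp.1 p.2)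
        linarith
  -- global bound on f over Xset × K
  obtain ⟨M, hM⟩ : ∃ M, ∀ x ∈ Xset, ∀ p ∈ K, f x p.1 p.2 ≤ M := by
    obtain ⟨M, hM⟩ := ((hXcp.prod hKcp).image_of_continuousOn hfc.continuousOn).bddAbove
    exact ⟨M, fun x hx p hp => hM ⟨(x, p), ⟨hx, hp⟩, rfl⟩⟩
  -- rewrite the optimality conditions
  have e1 : ∀ k, P (ρk k) (xk k) (yk k) (lk k) (zk k) ≤
      f (xk k) (yk k) (lk k) - ρk k * hg (yk k) (lk k) + εk k := by
    intro k
    have := hopt1 k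
    rw [hinner (ρk k) (hρkpos k).le] at this
    linarith
  have e2 : ∀ k, F (ρk k) (xk k) ≤ P (ρk k) (xk k) (yk k) (lk k) (zk k) + εk k := by
    intro k
    have h := hopt2 k
    have himg : (fun p : (EuclideanSpace ℝ (Fin dy)) × (EuclideanSpace ℝ (Fin dl)) =>
        sInf ((fun z => P (ρk k) (xk k) p.1 p.2 z) '' Yset)) '' K =
        (fun p : (EuclideanSpace ℝ (Fin dy)) × (EuclideanSpace ℝ (Fin dl)) => f (xk k) p.1 p.2 - ρk k * hg p.1 p.2) '' K := by
      apply Set.image_congr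
      intro p _
      exact hinner (ρk k) (hρkpos k).le (xk k) p.1 p.2
    rw [himg] at h
    rw [hF]
    linarith
  have e3 : ∀ k, F (ρk k) (xk k) ≤
      f (xk k) (yk k) (lk k) - ρk k * hg (yk k) (lk k) + 2 * εk k := by
    intro k; have := e1 k; have := e2 k; linarith
  have e4 : ∀ k, Φ (xk k) ≤ F (ρk k) (xk k) := fun k => hΦF (ρk k) (hρkpos k).le (xk k)
  have e5 : ∀ k, ΦStar ≤ Φ (xk k) := fun k => hΦSle (xk k) (hxk k)
  -- hg bound
  have hgb : ∀ k, hg (yk k) (lk k) ≤ (M - ΦStar + 2 * εk k) / ρk k := by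
    intro k
    rw [le_div_iff₀ (hρkpos k)]
    have h3 := e3 k
    have h4 := e4 k
    have h5 := e5 k
    have hMk := hM (xk k) (hxk k) (yk k, lk k) ⟨hyk k, hlk k⟩
    simp only at hMk
    nlinarith [mul_comm (hg (yk k) (lk k)) (ρk k)]
  -- subsequence
  obtain ⟨φ, hφmono, hφtend⟩ := TopologicalSpace.FirstCountableTopology.tendsto_subseq hcl
  have hφtop : Tendsto φ atTop atTop := hφmono.tendsto_atTop
  have htx : Tendsto (fun j => xk (φ j)) atTop (𝓝 xi) :=
    (continuous_fst.tendsto _).comp hφtend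
  have htyl : Tendsto (fun j => (yk (φ j), lk (φ j))) atTop (𝓝 (yi, li)) :=
    (continuous_snd.tendsto _).comp hφtend
  have hxiX : xi ∈ Xset :=
    hXcp.isClosed.mem_of_tendsto htx (Eventually.of_forall fun j => hxk (φ j))
  have hyilK : (yi, li) ∈ K :=
    hKcp.isClosed.mem_of_tendsto htyl (Eventually.of_forall fun j => ⟨hyk (φ j), hlk (φ j)⟩)
  -- feasibility of (yi, li)
  have hgtend : Tendsto (fun j => hg (yk (φ j)) (lk (φ j))) atTop (𝓝 (hg yi li)) :=
    (hhgc.tendsto (yi, li)).comp htyl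
  have hrhs0 : Tendsto (fun k => (M - ΦStar + 2 * εk k) / ρk k) atTop (𝓝 0) := by
    apply Tendsto.div_atTop (a := M - ΦStar + 2 * 0)
    · have := (hεk0.const_mul 2).const_add (M - ΦStar)
      simpa using this
    · exact hρktop
  have hfeas : hg yi li = 0 := by
    refine le_antisymm ?_ (hgnn yi hyilK.1 li)
    have hle : hg yi li ≤ 0 := by
      refine le_of_tendsto_of_tendsto hgtend (hrhs0.comp hφtop) ?_
      exact Eventually.of_forall fun j => hgb (φ j)
    exact hle
  -- f xi yi li = Φ xi
  have e6 : ∀ k, Φ (xk k) - 2 * εk k ≤ f (xk k) (yk k) (lk k) := by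
    intro k
    have h3 := e3 k
    have h4 := e4 k
    have hnn : 0 ≤ ρk k * hg (yk k) (lk k) :=
      mul_nonneg (hρkpos k).le (hgnn (yk k) (hyk k) (lk k))
    linarith
  have htf : Tendsto (fun j => f (xk (φ j)) (yk (φ j)) (lk (φ j))) atTop (𝓝 (f xi yi li)) := by
    have : Tendsto (fun j => (xk (φ j), yk (φ j), lk (φ j))) atTop (𝓝 (xi, yi, li)) := hφtend
    exact (hfc.tendsto (xi, yi, li)).comp this
  have htΦ : Tendsto (fun j => Φ (xk (φ j))) atTop (𝓝 (Φ xi)) :=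
    (hΦc.tendsto xi).comp htx
  have hεφ : Tendsto (fun j => εk (φ j)) atTop (𝓝 0) := hεk0.comp hφtop
  have hf_ge : Φ xi ≤ f xi yi li := by
    have hL : Tendsto (fun j => Φ (xk (φ j)) - 2 * εk (φ j)) atTop (𝓝 (Φ xi - 2 * 0)) :=
      htΦ.sub (hεφ.const_mul 2)
    have := le_of_tendsto_of_tendsto hL htf
      (Eventually.of_forall fun j => e6 (φ j))
    simpa using this
  have hf_le : f xi yi li ≤ Φ xi := hΦub xi (yi, li) ⟨hyilK, hfeas⟩
  have hfeq : f xi yi li = Φ xi := le_antisymm hf_le hf_ge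
  -- Φ xi = ΦStar
  have hΦxi : Φ xi = ΦStar := by
    refine le_antisymm ?_ (hΦSle xi hxiX)
    refine le_of_forall_pos_le_add ?_
    intro ε hε
    obtain ⟨ρ0, hρ00, hρ0⟩ := hkey xs ε hε
    have hFXbdd : ∀ k, BddBelow (F (ρk k) '' Xset) := by
      intro k
      refine ⟨ΦStar, ?_⟩
      rintro _ ⟨x, hx, rfl⟩
      exact le_trans (hΦSle x hx) (hΦF (ρk k) (hρkpos k).le x)
    have e7 : ∀ k, P (ρk k) (xk k) (yk k) (lk k) (zk k) ≤ F (ρk k) xs + εk k := by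
      intro k
      have h := hopt3 k
      have : sInf (F (ρk k) '' Xset) ≤ F (ρk k) xs :=
        csInf_le (hFXbdd k) ⟨xs, hxsX, rfl⟩
      linarith
    have e8 : ∀ k, Φ (xk k) ≤ F (ρk k) xs + 2 * εk k := by
      intro k
      have h2 := e2 k
      have h4 := e4 k
      have h7 := e7 k
      linarith
    have hev : ∀ᶠ k in atTop, Φ (xk k) ≤ ΦStar + ε + 2 * εk k := by
      filter_upwards [hρktop.eventually_ge_atTop ρ0] with k hk
      have := hρ0 (ρk k) hk
      rw [hxse] at this
      have := e8 k
      linarith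
    have hevφ : ∀ᶠ j in atTop, Φ (xk (φ j)) ≤ ΦStar + ε + 2 * εk (φ j) :=
      hφtop.eventually hev
    have hR : Tendsto (fun j => ΦStar + ε + 2 * εk (φ j)) atTop (𝓝 (ΦStar + ε + 2 * 0)) :=
      tendsto_const_nhds.add (hεφ.const_mul 2)
    have := le_of_tendsto_of_tendsto htΦ hR hevφ
    simpa using this
  exact ⟨⟨hyilK, hfeas⟩, hΦxi, hfeq⟩
end
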